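/- arXiv:2411.01314 — 6 statements merged into one kernel-verified Lean document; each statement's English description precedes it below -/
import Mathlib

section
/- For any simple graph G, the chromatic index χ'(G) satisfies Δ(G) ≤ χ'(G) ≤ Δ(G) + 1, where Δ(G) is the maximum degree of G. -/
/-!
The lower bound holds because the edges at a vertex get pairwise distinct colors.

For the upper bound, color the edges one at a time with `Δ + 1` colors, so that every vertex
misses some color. To color a new edge `xy₀`, grow a maximal fan `y₀, …, y_k` at `x`, in which
the edge `xy_{i+1}` has a color missing at `y_i`. Rotating the fan (recoloring each `xy_i` with the
color of `xy_{i+1}`) moves the uncolored edge to `xy_m` for any `m ≤ k`, without changing which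
colors are missing at `x` and `y_m`. Let `α` be missing at `x` and `β` at `y_k`. If `β` is missing
at `x`, rotate up to `y_k` and use `β`. Otherwise, by maximality, `β` is the color of some
`xy_{j+1}`, so `β` is missing at `y_j`. In the subgraph of `α`- and `β`-colored edges, every vertex
has degree at most two and `x`, `y_j`, `y_k` have degree at most one, so the component of `y_k` is
a path containing at most one of `x` and `y_j`. After swapping `α` and `β` on that component, a
rotation up to `y_j` or `y_k` leaves a color missing at both ends of the uncolored edge.
-/

/-- A proper edge coloring: distinct incident edges of `G` get distinct colors. -/
def IsProperEdgeColoring {V α : Type*} (G : SimpleGraph V) (c : Sym2 V → α) : Prop :=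
  ∀ e₁ ∈ G.edgeSet, ∀ e₂ ∈ G.edgeSet, e₁ ≠ e₂ → (∃ v, v ∈ e₁ ∧ v ∈ e₂) → c e₁ ≠ c e₂

/-- The chromatic index: least number of colors in a proper edge coloring. -/
noncomputable def chromaticIndex {V : Type*} (G : SimpleGraph V) : ℕ :=
  sInf {n | ∃ c : Sym2 V → Fin n, IsProperEdgeColoring G c}

namespace SimpleGraph

variable {V : Type*} {H : SimpleGraph V}

lemma Walk.IsPath.not_subsingleton_neighborSet_getVert {u v : V} {p : H.Walk u v}
    (hp : p.IsPath) {i : ℕ} (hi₀ : i ≠ 0) (hi : i < p.length) :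
    ¬ (H.neighborSet (p.getVert i)).Subsingleton := by
  intro h
  have hprev : H.Adj (p.getVert i) (p.getVert (i - 1)) := by
    simpa [Nat.sub_add_cancel (Nat.pos_of_ne_zero hi₀)] using
      (p.adj_getVert_succ (i := i - 1) (by omega)).symm
  have := hp.getVert_injOn (by rw [Set.mem_ofPred_eq]; omega) (by rw [Set.mem_ofPred_eq]; omega)
    (h hprev (p.adj_getVert_succ hi))
  omega

lemma Walk.IsPath.getVert_eq_of_subsingleton_neighborSet
    (hH : ∀ v s, H.Adj v s → (H.neighborSet v \ {s}).Subsingleton) {w a b : V}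
    (hw : (H.neighborSet w).Subsingleton) {p : H.Walk w a} {q : H.Walk w b}
    (hp : p.IsPath) (hq : q.IsPath) :
    ∀ i, i ≤ p.length → i ≤ q.length → p.getVert i = q.getVert i
  | 0, _, _ => by simp
  | 1, hip, hiq =>
    hw (by simpa using p.adj_getVert_succ (i := 0) (by omega))
      (by simpa using q.adj_getVert_succ (i := 0) (by omega))
  | i + 2, hip, hiq => by
    have hprev := getVert_eq_of_subsingleton_neighborSet hH hw hp hq i (by omega) (by omega)
    have hmid := getVert_eq_of_subsingleton_neighborSet hH hw hp hq (i + 1) (by omega) (by omega)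
    have hadj := (p.adj_getVert_succ (i := i) (by omega)).symm
    refine hH _ _ hadj ⟨p.adj_getVert_succ (by omega), fun h => ?_⟩
      ⟨hmid ▸ q.adj_getVert_succ (by omega), fun h => ?_⟩
    · have := hp.getVert_injOn (by rw [Set.mem_ofPred_eq]; omega)
        (by rw [Set.mem_ofPred_eq]; omega) h
      omega
    · rw [hprev] at h
      have := hq.getVert_injOn (by rw [Set.mem_ofPred_eq]; omega)
        (by rw [Set.mem_ofPred_eq]; omega) h
      omega

lemma eq_of_reachable_of_subsingleton_neighborSet_of_length_le
    (hH : ∀ v s, H.Adj v s → (H.neighborSet v \ {s}).Subsingleton) {w a b : V}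
    (hw : (H.neighborSet w).Subsingleton) (hb : (H.neighborSet b).Subsingleton) (hwb : w ≠ b)
    {p : H.Walk w a} {q : H.Walk w b} (hp : p.IsPath) (hq : q.IsPath)
    (hpq : q.length ≤ p.length) : b = a := by
  have hbp : b = p.getVert q.length := by
    rw [hp.getVert_eq_of_subsingleton_neighborSet hH hw hq _ hpq le_rfl, q.getVert_length]
  obtain hlt | heq := hpq.lt_or_eq
  · have hq₀ : q.length ≠ 0 := fun h => hwb (Walk.eq_of_length_eq_zero h)
    exact absurd (hbp ▸ hb) (hp.not_subsingleton_neighborSet_getVert hq₀ hlt)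
  · rw [hbp, heq, p.getVert_length]

theorem eq_of_reachable_of_subsingleton_neighborSet
    (hH : ∀ v s, H.Adj v s → (H.neighborSet v \ {s}).Subsingleton) {w a b : V}
    (hw : (H.neighborSet w).Subsingleton) (ha : (H.neighborSet a).Subsingleton)
    (hb : (H.neighborSet b).Subsingleton) (hwa : w ≠ a) (hwb : w ≠ b)
    (hra : H.Reachable w a) (hrb : H.Reachable w b) : a = b := by
  obtain ⟨p, hp⟩ := hra.exists_isPath
  obtain ⟨q, hq⟩ := hrb.exists_isPath
  obtain h | h := le_total q.length p.length
  · exact (eq_of_reachable_of_subsingleton_neighborSet_of_length_le hH hw hb hwb hp hq h).symm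
  · exact eq_of_reachable_of_subsingleton_neighborSet_of_length_le hH hw ha hwa hq hp h

end SimpleGraph

section EdgeColoring

variable {V κ : Type*}

def IsProperEdgeColoringOn (c : Sym2 V → κ) (S : Set (Sym2 V)) : Prop :=
  ∀ e₁ ∈ S, ∀ e₂ ∈ S, e₁ ≠ e₂ → (∃ v, v ∈ e₁ ∧ v ∈ e₂) → c e₁ ≠ c e₂

def IsMissingAt (c : Sym2 V → κ) (S : Set (Sym2 V)) (v : V) (a : κ) : Prop :=
  ∀ e ∈ S, v ∈ e → c e ≠ a

variable {c : Sym2 V → κ} {S S' : Set (Sym2 V)} {u v : V} {a : κ}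

lemma isProperEdgeColoring_iff {G : SimpleGraph V} :
    IsProperEdgeColoring G c ↔ IsProperEdgeColoringOn c G.edgeSet :=
  Iff.rfl

lemma IsProperEdgeColoringOn.mono (hc : IsProperEdgeColoringOn c S) (h : S' ⊆ S) :
    IsProperEdgeColoringOn c S' :=
  fun e₁ he₁ e₂ he₂ => hc e₁ (h he₁) e₂ (h he₂)

lemma IsMissingAt.mono (ha : IsMissingAt c S v a) (h : S' ⊆ S) : IsMissingAt c S' v a :=
  fun e he => ha e (h he)

lemma IsMissingAt.update_of_notMem [DecidableEq V] {e₀ : Sym2 V} {γ : κ}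
    (ha : IsMissingAt c S v a) (hv : v ∉ e₀) (h : S' ⊆ insert e₀ S) :
    IsMissingAt (Function.update c e₀ γ) S' v a := by
  intro e he hve
  have hne : e ≠ e₀ := by
    rintro rfl
    exact hv hve
  rw [Function.update_of_ne hne]
  exact ha e ((h he).resolve_left hne) hve

lemma IsMissingAt.update_of_mem [DecidableEq V] {e₀ e₁ : Sym2 V} (ha : IsMissingAt c S v a)
    (he₁ : e₁ ∈ S) (hv : v ∈ e₁) (h : S' ⊆ insert e₀ S) :
    IsMissingAt (Function.update c e₀ (c e₁)) S' v a := by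
  intro e he hve
  by_cases hne : e = e₀
  · rw [hne, Function.update_self]
    exact ha e₁ he₁ hv
  rw [Function.update_of_ne hne]
  exact ha e ((h he).resolve_left hne) hve

lemma IsProperEdgeColoringOn.update_insert [DecidableEq V] {γ : κ}
    (hc : IsProperEdgeColoringOn c S) (hu : IsMissingAt c S u γ) (hv : IsMissingAt c S v γ) :
    IsProperEdgeColoringOn (Function.update c s(u, v) γ) (insert s(u, v) S) := by
  have key : ∀ e ∈ insert s(u, v) S, e ≠ s(u, v) → ∀ w ∈ s(u, v), w ∈ e →
      γ ≠ Function.update c s(u, v) γ e := by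
    intro e he hne w hw hwe
    rw [Function.update_of_ne hne]
    have heS : e ∈ S := (Set.mem_insert_iff.1 he).resolve_left hne
    rcases Sym2.mem_iff.1 hw with rfl | rfl
    exacts [(hu e heS hwe).symm, (hv e heS hwe).symm]
  intro e₁ he₁ e₂ he₂ hne ⟨w, hw₁, hw₂⟩
  by_cases h₁ : e₁ = s(u, v)
  · subst h₁
    rw [Function.update_self]
    exact key e₂ he₂ (Ne.symm hne) w hw₁ hw₂
  by_cases h₂ : e₂ = s(u, v)
  · subst h₂
    rw [Function.update_self]
    exact (key e₁ he₁ h₁ w hw₂ hw₁).symm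
  rw [Function.update_of_ne h₁, Function.update_of_ne h₂]
  exact hc e₁ ((Set.mem_insert_iff.1 he₁).resolve_left h₁)
    e₂ ((Set.mem_insert_iff.1 he₂).resolve_left h₂) hne ⟨w, hw₁, hw₂⟩

lemma IsProperEdgeColoringOn.update_of_diff [DecidableEq V] {T : Set (Sym2 V)} {γ : κ}
    (hc : IsProperEdgeColoringOn c (T \ {s(u, v)})) (huv : s(u, v) ∈ T)
    (hu : IsMissingAt c (T \ {s(u, v)}) u γ) (hv : IsMissingAt c (T \ {s(u, v)}) v γ) :
    IsProperEdgeColoringOn (Function.update c s(u, v) γ) T := by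
  simpa [Set.insert_eq_of_mem huv] using hc.update_insert hu hv

end EdgeColoring

section Kempe

variable {V κ : Type*} {c : Sym2 V → κ} {S : Set (Sym2 V)} {α β a : κ} {u v w : V}
  {e : Sym2 V}

def kempeGraph (c : Sym2 V → κ) (S : Set (Sym2 V)) (α β : κ) : SimpleGraph V :=
  SimpleGraph.fromEdgeSet {e | e ∈ S ∧ (c e = α ∨ c e = β)}

lemma kempeGraph_adj :
    (kempeGraph c S α β).Adj u v ↔ (s(u, v) ∈ S ∧ (c s(u, v) = α ∨ c s(u, v) = β)) ∧ u ≠ v :=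
  SimpleGraph.fromEdgeSet_adj _

lemma reachable_kempeGraph_of_mem (he : e ∈ S) (hce : c e = α ∨ c e = β) (hu : u ∈ e)
    (hv : v ∈ e) (h : (kempeGraph c S α β).Reachable w u) :
    (kempeGraph c S α β).Reachable w v := by
  rcases eq_or_ne u v with rfl | huv
  · exact h
  obtain rfl := (Sym2.mem_and_mem_iff huv).1 ⟨hu, hv⟩
  exact h.trans (kempeGraph_adj.2 ⟨⟨he, hce⟩, huv⟩).reachable

lemma IsProperEdgeColoringOn.eq_of_kempeGraph_adj (hc : IsProperEdgeColoringOn c S)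
    {s t : V}
    (hs : (kempeGraph c S α β).Adj v s) (ht : (kempeGraph c S α β).Adj v t)
    (h : c s(v, s) = c s(v, t)) : s = t := by
  by_contra hst
  exact hc _ hs.1.1 _ ht.1.1 (fun h' => hst (Sym2.congr_right.1 h'))
    ⟨v, Sym2.mem_mk_left _ _, Sym2.mem_mk_left _ _⟩ h

lemma IsProperEdgeColoringOn.subsingleton_neighborSet_kempeGraph_diff
    (hc : IsProperEdgeColoringOn c S) {s : V} (hs : (kempeGraph c S α β).Adj v s) :
    ((kempeGraph c S α β).neighborSet v \ {s}).Subsingleton := by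
  rintro t ⟨ht, hts⟩ u ⟨hu, hus⟩
  have hts' : c s(v, t) ≠ c s(v, s) := fun h => hts (hc.eq_of_kempeGraph_adj ht hs h)
  have hus' : c s(v, u) ≠ c s(v, s) := fun h => hus (hc.eq_of_kempeGraph_adj hu hs h)
  refine hc.eq_of_kempeGraph_adj ht hu ?_
  rcases ht.1.2 with h₁ | h₁ <;> rcases hu.1.2 with h₂ | h₂ <;> rcases hs.1.2 with h₃ | h₃ <;>
    simp_all

lemma IsProperEdgeColoringOn.subsingleton_neighborSet_kempeGraph
    (hc : IsProperEdgeColoringOn c S) (hv : IsMissingAt c S v α ∨ IsMissingAt c S v β) :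
    ((kempeGraph c S α β).neighborSet v).Subsingleton := by
  intro s hs t ht
  refine hc.eq_of_kempeGraph_adj hs ht ?_
  have hs' := hs.1.2
  have ht' := ht.1.2
  rcases hv with h | h <;> have := h _ hs.1.1 (Sym2.mem_mk_left _ _) <;>
    have := h _ ht.1.1 (Sym2.mem_mk_left _ _) <;> simp_all

variable [DecidableEq κ]

open Classical in
/-- Exchanges `α` and `β` on the edges meeting the `α`/`β` component of `w`; this also touches edges
of other colors, which `Equiv.swap α β` leaves unchanged. -/
noncomputable def kempeSwap (c : Sym2 V → κ) (S : Set (Sym2 V)) (α β : κ) (w : V)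
    (e : Sym2 V) : κ :=
  if ∃ v ∈ e, (kempeGraph c S α β).Reachable w v then Equiv.swap α β (c e) else c e

lemma kempeSwap_apply_of_reachable (hv : v ∈ e) (h : (kempeGraph c S α β).Reachable w v) :
    kempeSwap c S α β w e = Equiv.swap α β (c e) :=
  if_pos ⟨v, hv, h⟩

lemma kempeSwap_apply_of_ne (hα : c e ≠ α) (hβ : c e ≠ β) : kempeSwap c S α β w e = c e := by
  unfold kempeSwap
  split_ifs
  exacts [Equiv.swap_apply_of_ne_of_ne hα hβ, rfl]

lemma kempeSwap_apply_of_not_reachable (he : e ∈ S) (hv : v ∈ e)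
    (h : ¬ (kempeGraph c S α β).Reachable w v) : kempeSwap c S α β w e = c e := by
  by_cases hce : c e = α ∨ c e = β
  · refine if_neg ?_
    rintro ⟨u, hu, hr⟩
    exact h (reachable_kempeGraph_of_mem he hce hu hv hr)
  · push Not at hce
    exact kempeSwap_apply_of_ne hce.1 hce.2

lemma IsProperEdgeColoringOn.kempeSwap (hc : IsProperEdgeColoringOn c S) :
    IsProperEdgeColoringOn (kempeSwap c S α β w) S := by
  intro e₁ he₁ e₂ he₂ hne ⟨v, hv₁, hv₂⟩
  by_cases hr : (kempeGraph c S α β).Reachable w v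
  · rw [kempeSwap_apply_of_reachable hv₁ hr, kempeSwap_apply_of_reachable hv₂ hr]
    exact (Equiv.swap α β).injective.ne (hc e₁ he₁ e₂ he₂ hne ⟨v, hv₁, hv₂⟩)
  · rw [kempeSwap_apply_of_not_reachable he₁ hv₁ hr,
      kempeSwap_apply_of_not_reachable he₂ hv₂ hr]
    exact hc e₁ he₁ e₂ he₂ hne ⟨v, hv₁, hv₂⟩

lemma IsMissingAt.kempeSwap_of_reachable (ha : IsMissingAt c S v a)
    (hv : (kempeGraph c S α β).Reachable w v) :
    IsMissingAt (kempeSwap c S α β w) S v (Equiv.swap α β a) := by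
  intro e he hve
  rw [kempeSwap_apply_of_reachable hve hv]
  exact (Equiv.swap α β).injective.ne (ha e he hve)

lemma IsMissingAt.kempeSwap_of_not_reachable (ha : IsMissingAt c S v a)
    (hv : ¬ (kempeGraph c S α β).Reachable w v) : IsMissingAt (kempeSwap c S α β w) S v a := by
  intro e he hve
  rw [kempeSwap_apply_of_not_reachable he hve hv]
  exact ha e he hve

lemma IsMissingAt.kempeSwap_of_ne (ha : IsMissingAt c S v a) (hα : a ≠ α) (hβ : a ≠ β) :
    IsMissingAt (kempeSwap c S α β w) S v a := by
  by_cases hv : (kempeGraph c S α β).Reachable w v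
  · simpa [Equiv.swap_apply_of_ne_of_ne hα hβ] using ha.kempeSwap_of_reachable hv
  · exact ha.kempeSwap_of_not_reachable hv

end Kempe

section Fan

variable {V κ : Type*} {c : Sym2 V → κ} {S T : Set (Sym2 V)} {x : V} {f : ℕ → V} {k : ℕ}

/-- A Vizing fan at `x`; `s(x, f 0)` is the edge still to be colored. -/
structure IsFan (c : Sym2 V → κ) (S : Set (Sym2 V)) (x : V) (f : ℕ → V) (k : ℕ) : Prop where
  injOn : Set.InjOn f (Set.Iic k)
  ne : ∀ i ≤ k, f i ≠ x
  mem : ∀ i < k, s(x, f (i + 1)) ∈ S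
  isMissingAt : ∀ i < k, IsMissingAt c S (f i) (c s(x, f (i + 1)))

namespace IsFan

lemma mk_inj (hf : IsFan c S x f k) {i j : ℕ} (hi : i ≤ k) (hj : j ≤ k) :
    s(x, f i) = s(x, f j) ↔ i = j :=
  ⟨fun h => hf.injOn (Set.mem_Iic.2 hi) (Set.mem_Iic.2 hj) (Sym2.congr_right.1 h),
    fun h => h ▸ rfl⟩

lemma notMem_mk (hf : IsFan c S x f k) {i j : ℕ} (hi : i ≤ k) (hj : j ≤ k) (hij : i ≠ j) :
    f i ∉ s(x, f j) := by
  rw [Sym2.mem_iff, not_or]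
  exact ⟨hf.ne i hi, fun h => hij (hf.injOn (Set.mem_Iic.2 hi) (Set.mem_Iic.2 hj) h)⟩

lemma mk_mem (hf : IsFan c (T \ {s(x, f 0)}) x f k) (hT : s(x, f 0) ∈ T) {i : ℕ} (hi : i ≤ k) :
    s(x, f i) ∈ T := by
  cases i with
  | zero => exact hT
  | succ i => exact (hf.mem i hi).1

lemma zero {y : V} (hy : y ≠ x) : IsFan c S x (fun _ => y) 0 where
  injOn i hi j hj _ := by rw [Set.mem_Iic, Nat.le_zero] at hi hj; rw [hi, hj]
  ne _ _ := hy
  mem _ h := absurd h (Nat.not_lt_zero _)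
  isMissingAt _ h := absurd h (Nat.not_lt_zero _)

lemma mono (hf : IsFan c S x f k) {m : ℕ} (hm : m ≤ k) : IsFan c S x f m where
  injOn := hf.injOn.mono (Set.Iic_subset_Iic.2 hm)
  ne i hi := hf.ne i (hi.trans hm)
  mem i hi := hf.mem i (hi.trans_le hm)
  isMissingAt i hi := hf.isMissingAt i (hi.trans_le hm)

lemma succ_le_card [Finite V] (hf : IsFan c S x f k) : k + 1 ≤ Nat.card V := by
  have hinj : Function.Injective (fun i : Fin (k + 1) => f i) := fun i j h =>
    Fin.ext (hf.injOn (Set.mem_Iic.2 (Nat.lt_succ_iff.1 i.2))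
      (Set.mem_Iic.2 (Nat.lt_succ_iff.1 j.2)) h)
  simpa using Nat.card_le_card_of_injective _ hinj

lemma snoc [DecidableEq V] (hf : IsFan c S x f k) {z : V} (hz : s(x, z) ∈ S) (hzx : z ≠ x)
    (hzf : ∀ i ≤ k, z ≠ f i) (hmiss : IsMissingAt c S (f k) (c s(x, z))) :
    IsFan c S x (Function.update f (k + 1) z) (k + 1) := by
  have hg : ∀ i ≤ k, Function.update f (k + 1) z i = f i := fun i hi =>
    Function.update_of_ne (by omega) _ _
  have hgk : Function.update f (k + 1) z (k + 1) = z := Function.update_self ..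
  have hcases : ∀ i ≤ k + 1, i ≤ k ∨ i = k + 1 := by omega
  refine ⟨fun i hi j hj h => ?_, fun i hi => ?_, fun i hi => ?_, fun i hi => ?_⟩
  · rw [Set.mem_Iic] at hi hj
    rcases hcases i hi with hi | rfl <;> rcases hcases j hj with hj | rfl
    · rw [hg i hi, hg j hj] at h
      exact hf.injOn hi hj h
    · rw [hg i hi, hgk] at h
      exact absurd h.symm (hzf i hi)
    · rw [hg j hj, hgk] at h
      exact absurd h (hzf j hj)
    · rfl
  · rcases hcases i hi with hi | rfl
    · rw [hg i hi]
      exact hf.ne i hi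
    · rwa [hgk]
  · rcases hcases (i + 1) hi with hi' | hi'
    · rw [hg _ hi']
      exact hf.mem i hi'
    · rwa [hi', hgk]
  · rw [hg i (by omega)]
    rcases hcases (i + 1) hi with hi' | hi'
    · rw [hg _ hi']
      exact hf.isMissingAt i hi'
    · obtain rfl : i = k := by omega
      rwa [hgk]

lemma isProperEdgeColoringOn_rotate [DecidableEq V]
    (hf : IsFan c (T \ {s(x, f 0)}) x f (k + 1))
    (hc : IsProperEdgeColoringOn c (T \ {s(x, f 0)})) (hT : s(x, f 0) ∈ T) :
    IsProperEdgeColoringOn (Function.update c s(x, f 0) (c s(x, f 1))) (T \ {s(x, f 1)}) := by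
  have he₁ : s(x, f 1) ∈ T \ {s(x, f 0)} := hf.mem 0 k.succ_pos
  have hx : IsMissingAt c ((T \ {s(x, f 0)}) \ {s(x, f 1)}) x (c s(x, f 1)) := fun e he hxe =>
    hc e he.1 _ he₁ he.2 ⟨x, hxe, Sym2.mem_mk_left _ _⟩
  convert (hc.mono Set.sdiff_subset).update_insert hx
    ((hf.isMissingAt 0 k.succ_pos).mono Set.sdiff_subset) using 1
  ext e
  by_cases h : e = s(x, f 0) <;> simp [h, hT, Ne.symm he₁.2]

lemma rotate [DecidableEq V] (hf : IsFan c (T \ {s(x, f 0)}) x f (k + 1)) :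
    IsFan (Function.update c s(x, f 0) (c s(x, f 1))) (T \ {s(x, f 1)}) x (fun i => f (i + 1))
      k where
  injOn i hi j hj h :=
    Nat.succ_injective (hf.injOn (Set.mem_Iic.2 (Nat.succ_le_succ hi))
      (Set.mem_Iic.2 (Nat.succ_le_succ hj)) h)
  ne i hi := hf.ne (i + 1) (by omega)
  mem i hi := by
    refine ⟨(hf.mem (i + 1) (by omega)).1, fun h => ?_⟩
    have := (hf.mk_inj (by omega) (by omega)).1 (Set.mem_singleton_iff.1 h)
    omega
  isMissingAt i hi := by
    have hne : s(x, f (i + 1 + 1)) ≠ s(x, f 0) := by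
      rw [Ne, hf.mk_inj (by omega) (by omega)]
      omega
    rw [Function.update_of_ne hne]
    exact (hf.isMissingAt (i + 1) (by omega)).update_of_notMem
      (hf.notMem_mk (by omega) (by omega) (by omega))
      (Set.sdiff_subset.trans (Set.subset_insert_sdiff_singleton _ _))

lemma exists_rotate [DecidableEq V] (hf : IsFan c (T \ {s(x, f 0)}) x f k)
    (hc : IsProperEdgeColoringOn c (T \ {s(x, f 0)})) (hT : s(x, f 0) ∈ T) :
    ∃ c' : Sym2 V → κ, IsProperEdgeColoringOn c' (T \ {s(x, f k)}) ∧
      (∀ a, IsMissingAt c (T \ {s(x, f 0)}) x a → IsMissingAt c' (T \ {s(x, f k)}) x a) ∧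
      (∀ a, IsMissingAt c (T \ {s(x, f 0)}) (f k) a →
        IsMissingAt c' (T \ {s(x, f k)}) (f k) a) := by
  induction k generalizing f c with
  | zero => exact ⟨c, hc, fun _ => id, fun _ => id⟩
  | succ k ih =>
    have hsub : T \ {s(x, f 1)} ⊆ insert s(x, f 0) (T \ {s(x, f 0)}) :=
      Set.sdiff_subset.trans (Set.subset_insert_sdiff_singleton _ _)
    obtain ⟨c', hc', hx', hk'⟩ := ih (f := fun i => f (i + 1)) hf.rotate
      (hf.isProperEdgeColoringOn_rotate hc hT) (hf.mk_mem hT (by omega))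
    refine ⟨c', hc', fun a ha => hx' a ?_, fun a ha => hk' a ?_⟩
    · exact ha.update_of_mem (hf.mem 0 k.succ_pos) (Sym2.mem_mk_left _ _) hsub
    · exact ha.update_of_notMem (hf.notMem_mk le_rfl (by omega) (by omega)) hsub

lemma apply_ne_of_isMissingAt (hf : IsFan c S x f k) (hc : IsProperEdgeColoringOn c S)
    {i j : ℕ} (hi : i < k) (hj : j < k) (hij : i ≠ j) {α : κ} (hα : IsMissingAt c S x α) :
    c s(x, f (i + 1)) ≠ α ∧ c s(x, f (i + 1)) ≠ c s(x, f (j + 1)) := by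
  refine ⟨hα _ (hf.mem i hi) (Sym2.mem_mk_left _ _), hc _ (hf.mem i hi) _ (hf.mem j hj) ?_
    ⟨x, Sym2.mem_mk_left _ _, Sym2.mem_mk_left _ _⟩⟩
  rw [Ne, hf.mk_inj (by omega) (by omega)]
  omega

lemma exists_isProperEdgeColoringOn_of_isMissingAt [DecidableEq V] {γ : κ}
    (hf : IsFan c (T \ {s(x, f 0)}) x f k) (hc : IsProperEdgeColoringOn c (T \ {s(x, f 0)}))
    (hT : s(x, f 0) ∈ T) (hx : IsMissingAt c (T \ {s(x, f 0)}) x γ)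
    (hk : IsMissingAt c (T \ {s(x, f 0)}) (f k) γ) :
    ∃ c' : Sym2 V → κ, IsProperEdgeColoringOn c' T := by
  obtain ⟨c', hc', hx', hk'⟩ := hf.exists_rotate hc hT
  exact ⟨_, hc'.update_of_diff (hf.mk_mem hT le_rfl) (hx' γ hx) (hk' γ hk)⟩

lemma kempeSwap [DecidableEq κ] {α β : κ} {w : V} (hf : IsFan c S x f k)
    (h : ∀ i < k, (c s(x, f (i + 1)) ≠ α ∧ c s(x, f (i + 1)) ≠ β) ∨
      (¬ (kempeGraph c S α β).Reachable w x ∧ ¬ (kempeGraph c S α β).Reachable w (f i))) :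
    IsFan (kempeSwap c S α β w) S x f k where
  injOn := hf.injOn
  ne := hf.ne
  mem := hf.mem
  isMissingAt i hi := by
    rcases h i hi with ⟨hα, hβ⟩ | ⟨hx, hfi⟩
    · rw [kempeSwap_apply_of_ne hα hβ]
      exact (hf.isMissingAt i hi).kempeSwap_of_ne hα hβ
    · rw [kempeSwap_apply_of_not_reachable (hf.mem i hi) (Sym2.mem_mk_left _ _) hx]
      exact (hf.isMissingAt i hi).kempeSwap_of_not_reachable hfi

lemma exists_isProperEdgeColoringOn_of_apply_eq [DecidableEq V] [DecidableEq κ]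
    {α β : κ} {j : ℕ}
    (hf : IsFan c (T \ {s(x, f 0)}) x f k) (hc : IsProperEdgeColoringOn c (T \ {s(x, f 0)}))
    (hT : s(x, f 0) ∈ T) (hj : j < k) (hα : IsMissingAt c (T \ {s(x, f 0)}) x α)
    (hβ : IsMissingAt c (T \ {s(x, f 0)}) (f k) β) (hβj : c s(x, f (j + 1)) = β) :
    ∃ c' : Sym2 V → κ, IsProperEdgeColoringOn c' T := by
  set S := T \ {s(x, f 0)}
  set R := (kempeGraph c S α β).Reachable (f k)
  have hβj' : IsMissingAt c S (f j) β := hβj ▸ hf.isMissingAt j hj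
  have hcol : ∀ i < k, i ≠ j → c s(x, f (i + 1)) ≠ α ∧ c s(x, f (i + 1)) ≠ β := fun i hi hij =>
    hβj ▸ hf.apply_ne_of_isMissingAt hc hi hj hij hα
  -- `x`, `f j` and `f k` have degree at most one in the `α`/`β` graph, so the component of `f k`
  -- (a path) contains at most one of `x` and `f j`.
  have hleaves : ¬ (R x ∧ R (f j)) := by
    rintro ⟨hx, hfj⟩
    refine hf.ne j hj.le (SimpleGraph.eq_of_reachable_of_subsingleton_neighborSet
      (fun v s hs => hc.subsingleton_neighborSet_kempeGraph_diff hs)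
      (hc.subsingleton_neighborSet_kempeGraph (Or.inr hβ))
      (hc.subsingleton_neighborSet_kempeGraph (Or.inl hα))
      (hc.subsingleton_neighborSet_kempeGraph (Or.inr hβj'))
      (hf.ne k le_rfl) (fun h => ?_) hx hfj).symm
    have := hf.injOn (Set.mem_Iic.2 le_rfl) (Set.mem_Iic.2 hj.le) h
    omega
  have hc' := hc.kempeSwap (α := α) (β := β) (w := f k)
  have hsub := (hf.mono hj.le).kempeSwap (w := f k)
    fun i hi => Or.inl (hcol i (by omega) (by omega))
  by_cases hx : R x
  · have hfj : ¬ R (f j) := fun h => hleaves ⟨hx, h⟩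
    exact hsub.exists_isProperEdgeColoringOn_of_isMissingAt hc' hT
      (by simpa using hα.kempeSwap_of_reachable hx) (hβj'.kempeSwap_of_not_reachable hfj)
  by_cases hfj : R (f j)
  · exact hsub.exists_isProperEdgeColoringOn_of_isMissingAt hc' hT
      (hα.kempeSwap_of_not_reachable hx) (by simpa using hβj'.kempeSwap_of_reachable hfj)
  have hfull := hf.kempeSwap (w := f k) (α := α) (β := β) fun i hi => by
    rcases eq_or_ne i j with rfl | hij
    exacts [Or.inr ⟨hx, hfj⟩, Or.inl (hcol i hi hij)]
  exact hfull.exists_isProperEdgeColoringOn_of_isMissingAt hc' hT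
    (hα.kempeSwap_of_not_reachable hx)
    (by simpa using hβ.kempeSwap_of_reachable (α := α) (β := β) SimpleGraph.Reachable.rfl)

theorem exists_isProperEdgeColoringOn [Finite V] [DecidableEq V] [DecidableEq κ] {y : V}
    {f : ℕ → V} {k : ℕ}
    (hT : ∀ e ∈ T, ¬ e.IsDiag) (hy : s(x, y) ∈ T)
    (hc : IsProperEdgeColoringOn c (T \ {s(x, y)}))
    (hmiss : ∀ v, ∃ a, IsMissingAt c (T \ {s(x, y)}) v a)
    (hf : IsFan c (T \ {s(x, y)}) x f k) (hf0 : f 0 = y) :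
    ∃ c' : Sym2 V → κ, IsProperEdgeColoringOn c' T := by
  subst hf0
  obtain ⟨α, hα⟩ := hmiss x
  obtain ⟨β, hβ⟩ := hmiss (f k)
  by_cases hβx : IsMissingAt c (T \ {s(x, f 0)}) x β
  · exact hf.exists_isProperEdgeColoringOn_of_isMissingAt hc hy hβx hβ
  obtain ⟨z, hz, hzβ⟩ : ∃ z, s(x, z) ∈ T \ {s(x, f 0)} ∧ c s(x, z) = β := by
    simp only [IsMissingAt, not_forall, not_not] at hβx
    obtain ⟨e, he, hxe, hce⟩ := hβx
    obtain ⟨z, rfl⟩ := Sym2.mem_iff_exists.1 hxe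
    exact ⟨z, he, hce⟩
  by_cases hzf : ∃ j < k, z = f (j + 1)
  · obtain ⟨j, hj, rfl⟩ := hzf
    exact hf.exists_isProperEdgeColoringOn_of_apply_eq hc hy hj hα hβ hzβ
  push Not at hzf
  have hzf' : ∀ i ≤ k, z ≠ f i
    | 0, _, h => hz.2 (by rw [h]; rfl)
    | i + 1, hi, h => hzf i (by omega) h
  have hzx : z ≠ x := fun h => hT _ hz.1 (h ▸ Sym2.mk_isDiag_iff.2 rfl)
  exact exists_isProperEdgeColoringOn hT hy hc hmiss (hf.snoc hz hzx hzf' (hzβ ▸ hβ))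
    (Function.update_of_ne (by omega) _ _)
termination_by Nat.card V - k
decreasing_by
  have := hf.succ_le_card
  omega

end IsFan

end Fan

theorem exists_isProperEdgeColoringOn_of_diff {V κ : Type*} [Finite V] [DecidableEq V]
    [DecidableEq κ] {T : Set (Sym2 V)} {c : Sym2 V → κ} {x y : V} (hT : ∀ e ∈ T, ¬ e.IsDiag)
    (hy : s(x, y) ∈ T) (hc : IsProperEdgeColoringOn c (T \ {s(x, y)}))
    (hmiss : ∀ v, ∃ a, IsMissingAt c (T \ {s(x, y)}) v a) :
    ∃ c' : Sym2 V → κ, IsProperEdgeColoringOn c' T :=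
  IsFan.exists_isProperEdgeColoringOn hT hy hc hmiss
    (IsFan.zero fun h => hT _ hy (h ▸ Sym2.mk_isDiag_iff.2 rfl)) rfl

section Degree

variable {V κ : Type*} [Fintype V] [Fintype κ]

lemma IsProperEdgeColoring.degree_le_card {G : SimpleGraph V} [DecidableRel G.Adj]
    {c : Sym2 V → κ} (hc : IsProperEdgeColoring G c) (v : V) : G.degree v ≤ Fintype.card κ := by
  classical
  rw [← G.card_incidenceFinset_eq_degree]
  refine Finset.card_le_card_of_injOn c (fun _ _ => Finset.mem_coe.2 (Finset.mem_univ _)) ?_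
  intro e₁ he₁ e₂ he₂ h
  by_contra hne
  rw [Finset.mem_coe, SimpleGraph.mem_incidenceFinset] at he₁ he₂
  exact hc e₁ he₁.1 e₂ he₂.1 hne ⟨v, he₁.2, he₂.2⟩ h

namespace SimpleGraph

variable (G : SimpleGraph V) [DecidableRel G.Adj]

lemma exists_isMissingAt (h : G.maxDegree < Fintype.card κ) (c : Sym2 V → κ)
    {S : Set (Sym2 V)} (hS : S ⊆ G.edgeSet) (v : V) : ∃ a, IsMissingAt c S v a := by
  classical
  obtain ⟨a, -, ha⟩ := Finset.exists_mem_notMem_of_card_lt_card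
    (s := (G.incidenceFinset v).image c) (t := Finset.univ) <| calc
      ((G.incidenceFinset v).image c).card ≤ (G.incidenceFinset v).card := Finset.card_image_le
      _ = G.degree v := G.card_incidenceFinset_eq_degree v
      _ ≤ G.maxDegree := G.degree_le_maxDegree v
      _ < Fintype.card κ := h
      _ = Finset.univ.card := Finset.card_univ.symm
  refine ⟨a, fun e he hve hce => ha (Finset.mem_image.2 ⟨e, ?_, hce⟩)⟩
  rw [mem_incidenceFinset]
  exact ⟨hS he, hve⟩

theorem exists_isProperEdgeColoring_of_maxDegree_lt (h : G.maxDegree < Fintype.card κ) :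
    ∃ c : Sym2 V → κ, IsProperEdgeColoring G c := by
  classical
  have : Nonempty κ := Fintype.card_pos_iff.1 (Nat.zero_lt_of_lt h)
  suffices ∀ s : Finset (Sym2 V), ↑s ⊆ G.edgeSet →
      ∃ c : Sym2 V → κ, IsProperEdgeColoringOn c s by
    obtain ⟨c, hc⟩ := this G.edgeFinset (by simp)
    rw [coe_edgeFinset] at hc
    exact ⟨c, isProperEdgeColoring_iff.2 hc⟩
  intro s
  induction s using Finset.induction_on with
  | empty => exact fun _ => ⟨fun _ => Classical.arbitrary κ, by simp [IsProperEdgeColoringOn]⟩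
  | insert e s he ih =>
    intro hs
    have hs' : ↑s ⊆ G.edgeSet := (Finset.coe_subset.2 (Finset.subset_insert _ _)).trans hs
    obtain ⟨c, hc⟩ := ih hs'
    induction e using Sym2.ind with | h x y => ?_
    have hdiff : ↑(insert s(x, y) s) \ {s(x, y)} = (s : Set (Sym2 V)) := by
      rw [Finset.coe_insert, Set.insert_sdiff_self_of_notMem (Finset.mem_coe.not.2 he)]
    exact exists_isProperEdgeColoringOn_of_diff
      (fun e he => G.not_isDiag_of_mem_edgeSet (hs he)) (by simp) (hdiff ▸ hc)
      (hdiff ▸ G.exists_isMissingAt h c hs')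

end SimpleGraph

end Degree

/-- Vizing's theorem: `Δ(G) ≤ χ'(G) ≤ Δ(G) + 1`. -/
theorem stmt_0 {V : Type*} [Fintype V] (G : SimpleGraph V) [DecidableRel G.Adj] :
    G.maxDegree ≤ chromaticIndex G ∧ chromaticIndex G ≤ G.maxDegree + 1 := by
  obtain ⟨c, hc⟩ :=
    G.exists_isProperEdgeColoring_of_maxDegree_lt (κ := Fin (G.maxDegree + 1)) (by simp)
  have hmem : G.maxDegree + 1 ∈ {n | ∃ c : Sym2 V → Fin n, IsProperEdgeColoring G c} := ⟨c, hc⟩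
  refine ⟨le_csInf ⟨_, hmem⟩ ?_, Nat.sInf_le hmem⟩
  rintro n ⟨c, hc⟩
  simpa using G.maxDegree_le_of_forall_degree_le n fun v => by
    simpa using hc.degree_le_card v
end

section
/- Removing all pendant vertices (vertices of degree 1) from a connected graph G with at least one edge in the remaining graph does not change its stretch index: σ(G) = σ(G \ P), where P is the set of degree-1 vertices. -/
/-- `T` is a tree `t`-spanner of `G`: a spanning tree of `G` in which the endpoints of
every edge of `G` are at distance at most `t`. -/
def IsTreeSpanner {V : Type*} (G T : SimpleGraph V) (t : ℕ) : Prop :=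
  T ≤ G ∧ T.IsTree ∧ ∀ u v, G.Adj u v → T.dist u v ≤ t

/-- The stretch index `σ(G)`: the least `t ≥ 1` such that `G` admits a tree `t`-spanner. -/
noncomputable def stretchIndex {V : Type*} (G : SimpleGraph V) : ℕ :=
  sInf {t | 1 ≤ t ∧ ∃ T : SimpleGraph V, IsTreeSpanner G T t}

/-!
A vertex of degree one has a single neighbour, so it lies on no cycle and is an inner vertex
of no path, in `G` or in any subgraph of `G`. Hence a spanning tree of `G` restricts to a
spanning tree of `G \ P` in which distances between the remaining vertices are unchanged, and
conversely a spanning tree of `G \ P` becomes a spanning tree of `G` by adding the pendant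
edges, each of which has stretch `1`.
-/

namespace SimpleGraph

variable {V : Type*}

lemma Walk.IsPath.neighborSet_nontrivial {G : SimpleGraph V} {u v w : V} {p : G.Walk u v}
    (hp : p.IsPath) (hw : w ∈ p.support) (hwu : w ≠ u) (hwv : w ≠ v) :
    (G.neighborSet w).Nontrivial := by
  obtain ⟨i, rfl, hi⟩ := Walk.mem_support_iff_exists_getVert.1 hw
  have hi0 : i ≠ 0 := by rintro rfl; exact hwu p.getVert_zero
  have hil : i < p.length := lt_of_le_of_ne hi (by rintro rfl; exact hwv p.getVert_length)
  have htwo := hp.ncard_neighborSet_toSubgraph_internal_eq_two hi0 hil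
  exact ((Set.one_lt_ncard_iff_nontrivial_and_finite.1 (by omega)).1).mono
    (p.toSubgraph.neighborSet_subset _)

lemma Walk.IsCycle.neighborSet_nontrivial {G : SimpleGraph V} {u w : V} {c : G.Walk u u}
    (hc : c.IsCycle) (hw : w ∈ c.support) : (G.neighborSet w).Nontrivial :=
  ((Set.one_lt_ncard_iff_nontrivial_and_finite.1
    (by rw [hc.ncard_neighborSet_toSubgraph_eq_two hw]; omega)).1).mono
    (c.toSubgraph.neighborSet_subset _)

lemma Reachable.dist_map_le {G : SimpleGraph V} {V' : Type*} {G' : SimpleGraph V'}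
    (f : G →g G') {u v : V} (h : G.Reachable u v) : G'.dist (f u) (f v) ≤ G.dist u v := by
  obtain ⟨p, hp⟩ := h.exists_walk_length_eq_dist
  exact (dist_le (p.map f)).trans (by rw [Walk.length_map, hp])

section LeavesOutside

variable {T : SimpleGraph V} {S : Set V}

lemma Walk.IsPath.support_subset (hS : ∀ v ∉ S, (T.neighborSet v).Subsingleton) {u v : V}
    {p : T.Walk u v} (hp : p.IsPath) (hu : u ∈ S) (hv : v ∈ S) :
    ∀ w ∈ p.support, w ∈ S := by
  intro w hw
  by_contra hwS
  exact (hp.neighborSet_nontrivial hw (by rintro rfl; exact hwS hu)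
    (by rintro rfl; exact hwS hv)).not_subsingleton (hS w hwS)

lemma Walk.IsCycle.support_subset (hS : ∀ v ∉ S, (T.neighborSet v).Subsingleton) {u : V}
    {c : T.Walk u u} (hc : c.IsCycle) : ∀ w ∈ c.support, w ∈ S := fun w hw => by
  by_contra hwS
  exact (hc.neighborSet_nontrivial hw).not_subsingleton (hS w hwS)

lemma Reachable.exists_walk_induce_length_eq_dist (hS : ∀ v ∉ S, (T.neighborSet v).Subsingleton)
    {u v : S} (h : T.Reachable u v) : ∃ q : (T.induce S).Walk u v, q.length = T.dist u v := by
  obtain ⟨p, hp⟩ := h.exists_walk_length_eq_dist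
  have hsupp := (p.isPath_of_length_eq_dist hp).support_subset hS u.2 v.2
  refine ⟨p.induce S hsupp, ?_⟩
  rw [← hp, ← Walk.length_map (Embedding.induce S).toHom]
  exact congrArg Walk.length (p.map_induce hsupp)

lemma isAcyclic_of_isAcyclic_induce (hS : ∀ v ∉ S, (T.neighborSet v).Subsingleton)
    (h : (T.induce S).IsAcyclic) : T.IsAcyclic := by
  intro u c hc
  have hsupp := hc.support_subset hS
  apply h (c.induce S hsupp)
  rw [← Walk.isCycle_map_iff_of_injective (f := (Embedding.induce S).toHom)
    Subtype.val_injective, Walk.map_induce]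
  exact hc

lemma IsTree.induce (hS : ∀ v ∉ S, (T.neighborSet v).Subsingleton) [Nonempty S]
    (h : T.IsTree) : (T.induce S).IsTree := by
  refine ⟨Connected.mk fun u v => ?_, h.isAcyclic.induce S⟩
  obtain ⟨q, -⟩ := (h.connected u v).exists_walk_induce_length_eq_dist hS
  exact q.reachable

end LeavesOutside

def extendOutside (G : SimpleGraph V) (S : Set V) (T' : SimpleGraph S) : SimpleGraph V where
  Adj u v := (∃ (hu : u ∈ S) (hv : v ∈ S), T'.Adj ⟨u, hu⟩ ⟨v, hv⟩) ∨
    (G.Adj u v ∧ (u ∉ S ∨ v ∉ S))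
  symm := by
    constructor
    rintro u v (⟨hu, hv, h⟩ | ⟨h, hs⟩)
    exacts [Or.inl ⟨hv, hu, h.symm⟩, Or.inr ⟨h.symm, hs.symm⟩]
  loopless := by
    constructor
    rintro u (⟨_, _, h⟩ | ⟨h, -⟩)
    exacts [T'.loopless.irrefl _ h, G.loopless.irrefl _ h]

variable {G : SimpleGraph V} {S : Set V} {T' : SimpleGraph S}

lemma extendOutside_le (h : T' ≤ G.induce S) : G.extendOutside S T' ≤ G := by
  rintro u v (⟨hu, hv, huv⟩ | ⟨huv, -⟩)
  exacts [h huv, huv]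

@[simp]
lemma induce_extendOutside : (G.extendOutside S T').induce S = T' := by
  ext ⟨u, hu⟩ ⟨v, hv⟩
  simp [extendOutside, hu, hv]

lemma extendOutside_adj_of_notMem {u v : V} (huv : G.Adj u v) (h : u ∉ S ∨ v ∉ S) :
    (G.extendOutside S T').Adj u v :=
  Or.inr ⟨huv, h⟩

end SimpleGraph

section TreeSpanner

open SimpleGraph

variable {V : Type*} {G T : SimpleGraph V} {S : Set V} {t : ℕ}

lemma IsTreeSpanner.induce [Nonempty S] (hS : ∀ v ∉ S, (G.neighborSet v).Subsingleton)
    (h : IsTreeSpanner G T t) : IsTreeSpanner (G.induce S) (T.induce S) t := by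
  obtain ⟨hle, htree, hdist⟩ := h
  have hTS : ∀ v ∉ S, (T.neighborSet v).Subsingleton :=
    fun v hv => (hS v hv).anti fun _ h => hle h
  refine ⟨fun u v huv => hle huv, htree.induce hTS, fun u v huv => ?_⟩
  obtain ⟨q, hq⟩ := (htree.connected u v).exists_walk_induce_length_eq_dist hTS
  exact (dist_le q).trans (hq ▸ hdist u v huv)

lemma IsTreeSpanner.extendOutside {T' : SimpleGraph S}
    (hS : ∀ v ∉ S, (G.neighborSet v).Subsingleton) (hout : ∀ v ∉ S, ∃ w ∈ S, G.Adj v w)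
    (ht : 1 ≤ t) (h : IsTreeSpanner (G.induce S) T' t) :
    IsTreeSpanner G (G.extendOutside S T') t := by
  obtain ⟨hle, htree, hdist⟩ := h
  set T := G.extendOutside S T'
  have hTS : ∀ v ∉ S, (T.neighborSet v).Subsingleton :=
    fun v hv => (hS v hv).anti fun _ h => extendOutside_le hle h
  rw [← induce_extendOutside (G := G) (T' := T')] at htree hdist
  have hreach (v : V) : ∃ w : S, T.Reachable v w := by
    by_cases hv : v ∈ S
    · exact ⟨⟨v, hv⟩, .rfl⟩
    · obtain ⟨w, hw, hvw⟩ := hout v hv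
      exact ⟨⟨w, hw⟩, (extendOutside_adj_of_notMem hvw (.inl hv)).reachable⟩
  have hconn : T.Connected := by
    have : Nonempty V := ⟨(htree.connected.nonempty.some : V)⟩
    refine Connected.mk fun u v => ?_
    obtain ⟨u', hu⟩ := hreach u
    obtain ⟨v', hv⟩ := hreach v
    exact hu.trans (((htree.connected u' v').map (Embedding.induce S).toHom).trans hv.symm)
  refine ⟨extendOutside_le hle, ⟨hconn, isAcyclic_of_isAcyclic_induce hTS htree.isAcyclic⟩,
    fun u v huv => ?_⟩
  by_cases hin : u ∈ S ∧ v ∈ S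
  · obtain ⟨hu, hv⟩ := hin
    calc T.dist u v ≤ (T.induce S).dist ⟨u, hu⟩ ⟨v, hv⟩ :=
          (htree.connected ⟨u, hu⟩ ⟨v, hv⟩).dist_map_le (Embedding.induce S).toHom
      _ ≤ t := hdist _ _ huv
  · rw [not_and_or] at hin
    rw [dist_eq_one_iff_adj.2 (extendOutside_adj_of_notMem huv hin)]
    exact ht

end TreeSpanner

theorem stmt_5_general {V : Type*} [Fintype V] (G : SimpleGraph V) [DecidableRel G.Adj]
    (hconn' : (G.induce {v : V | G.degree v ≠ 1}).Connected)
    (hpend : ∀ u v : V, G.degree u = 1 → G.Adj u v → G.degree v ≠ 1) :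
    stretchIndex G = stretchIndex (G.induce {v : V | G.degree v ≠ 1}) := by
  set S := {v : V | G.degree v ≠ 1}
  have : Nonempty S := hconn'.nonempty
  have hunique (v : V) (hv : v ∉ S) : ∃! w, G.Adj v w :=
    SimpleGraph.degree_eq_one_iff_existsUnique_adj.1 (not_not.1 hv)
  have hS (v : V) (hv : v ∉ S) : (G.neighborSet v).Subsingleton :=
    fun _ hx _ hy => (hunique v hv).unique hx hy
  have hout (v : V) (hv : v ∉ S) : ∃ w ∈ S, G.Adj v w := by
    obtain ⟨w, hvw, -⟩ := hunique v hv
    exact ⟨w, hpend v w (not_not.1 hv) hvw, hvw⟩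
  unfold stretchIndex
  congr 1
  ext t
  exact ⟨fun ⟨ht, _, h⟩ => ⟨ht, _, h.induce hS⟩,
    fun ⟨ht, _, h⟩ => ⟨ht, _, h.extendOutside hS hout ht⟩⟩

/-- Removing the pendant (degree-1) vertices of a connected graph does not change the
stretch index, provided the remaining graph is connected, still has an edge, and every
pendant vertex has its (unique) neighbor among the non-pendant vertices. -/
theorem stmt_5 {V : Type*} [Fintype V] (G : SimpleGraph V) [DecidableRel G.Adj]
    (hconn : G.Connected)
    (hconn' : (G.induce {v : V | G.degree v ≠ 1}).Connected)
    (hedge : (G.induce {v : V | G.degree v ≠ 1}).edgeSet.Nonempty)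
    (hpend : ∀ u v : V, G.degree u = 1 → G.Adj u v → G.degree v ≠ 1) :
    stretchIndex G = stretchIndex (G.induce {v : V | G.degree v ≠ 1}) :=
  stmt_5_general G hconn' hpend
end

section
/- Let G = ((Q,S),E) be a connected split graph in which every vertex of the independent set S has degree greater than 1, and G is not a tree. Then σ(G) = 2 if and only if G has a universal vertex. -/
namespace SimpleGraph

variable {V : Type*} {G T : SimpleGraph V}

lemma Connected.adj_of_dist_le_one (hG : G.Connected) {u v : V} (h : G.dist u v ≤ 1)
    (hne : u ≠ v) : G.Adj u v :=
  dist_eq_one_iff_adj.mp (le_antisymm h (hG.pos_dist_of_ne hne))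

lemma exists_adj_adj_of_dist_eq_two {u v : V} (h : G.dist u v = 2) :
    ∃ w, G.Adj u w ∧ G.Adj w v := by
  obtain ⟨p, hp⟩ := exists_walk_of_dist_ne_zero (h ▸ two_ne_zero)
  rw [h] at hp
  rcases p with _ | ⟨h₁, _ | ⟨h₂, _ | _⟩⟩ <;> simp at hp
  exact ⟨_, h₁, h₂⟩

lemma dist_starGraph_le_two (r u v : V) : (starGraph r).dist u v ≤ 2 := by
  have center : ∀ x, (starGraph r).dist r x ≤ 1 := fun x => by
    rcases eq_or_ne r x with rfl | h
    · simp
    · exact (dist_eq_one_iff_adj.mpr (starGraph_center_adj h)).le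
  calc (starGraph r).dist u v ≤ (starGraph r).dist u r + (starGraph r).dist r v :=
        (connected_starGraph r).dist_triangle
    _ ≤ 1 + 1 := add_le_add (dist_comm ▸ center u) (center v)

lemma IsTree.eq_of_adj_of_dist_lt (hT : T.IsTree) {s c q₁ q₂ : V} (h₁ : T.Adj c q₁)
    (h₂ : T.Adj c q₂) (hq₁ : T.dist s q₁ < T.dist s c) (hq₂ : T.dist s q₂ < T.dist s c) :
    q₁ = q₂ := by
  classical
  obtain ⟨p, hp, -⟩ := hT.connected.exists_path_of_dist s c
  have eq_penultimate : ∀ q, T.Adj c q → T.dist s q < T.dist s c → q = p.penultimate := by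
    intro q hcq hlt
    obtain ⟨r, hr, hrl⟩ := hT.connected.exists_path_of_dist s q
    have hc : c ∉ r.support := fun hc => by
      have := (dist_le (r.takeUntil c hc)).trans (r.length_takeUntil_le_length hc)
      omega
    exact hT.isAcyclic.eq_penultimate_of_adj_end hp hcq
      (hT.isAcyclic.mem_support_of_ne_mem_support_of_adj_of_isPath hp hr hcq hc)
  exact (eq_penultimate q₁ h₁ hq₁).trans (eq_penultimate q₂ h₂ hq₂).symm

lemma IsTree.dist_le_one_of_dist_le_two (hT : T.IsTree) {s c q₁ q₂ : V} (hne : q₁ ≠ q₂)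
    (h₁ : T.Adj c q₁) (h₂ : T.Adj c q₂) (hs₁ : T.dist s q₁ ≤ 2) (hs₂ : T.dist s q₂ ≤ 2) :
    T.dist s c ≤ 1 := by
  by_contra! hc
  have closer : ∀ q, T.Adj c q → T.dist s q ≤ 2 → T.dist s q < T.dist s c := by
    intro q hcq hsq
    rcases hT.dist_eq_dist_add_one_of_adj s hcq with h | h <;> omega
  exact hne (hT.eq_of_adj_of_dist_lt h₁ h₂ (closer q₁ h₁ hs₁) (closer q₂ h₂ hs₂))

lemma IsTree.exists_dist_le_one_of_dist_le_two (hT : T.IsTree) {A : Set V}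
    (hA : ∀ a ∈ A, ∀ b ∈ A, T.dist a b ≤ 2) : ∃ c, ∀ a ∈ A, T.dist c a ≤ 1 := by
  by_cases h : ∃ x ∈ A, ∃ y ∈ A, T.dist x y = 2
  · obtain ⟨x, hx, y, hy, hxy⟩ := h
    obtain ⟨c, hxc, hcy⟩ := exists_adj_adj_of_dist_eq_two hxy
    have hne : x ≠ y := by
      rintro rfl
      simp at hxy
    refine ⟨c, fun a ha => dist_comm ▸ ?_⟩
    exact hT.dist_le_one_of_dist_le_two hne hxc.symm hcy (hA a ha x hx) (hA a ha y hy)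
  · push Not at h
    rcases A.eq_empty_or_nonempty with rfl | ⟨x, hx⟩
    · exact ⟨hT.connected.nonempty.some, by simp⟩
    · refine ⟨x, fun a ha => ?_⟩
      have := hA x hx a ha
      have := h x hx a ha
      omega

end SimpleGraph

open SimpleGraph

section TreeSpanner

variable {V : Type*} {G T : SimpleGraph V}

lemma IsTreeSpanner.isTree_of_one (h : IsTreeSpanner G T 1) : G.IsTree := by
  obtain ⟨hle, hT, hdist⟩ := h
  have : G = T :=
    le_antisymm (fun u v huv => hT.connected.adj_of_dist_le_one (hdist u v huv) huv.ne) hle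
  exact this ▸ hT

lemma stretchIndex_eq_two_iff (hG : ¬ G.IsTree) :
    stretchIndex G = 2 ↔ ∃ T, IsTreeSpanner G T 2 := by
  constructor
  · intro h
    have hne : {t | 1 ≤ t ∧ ∃ T, IsTreeSpanner G T t}.Nonempty :=
      Set.nonempty_iff_ne_empty.mpr fun he => by simp [stretchIndex, he] at h
    have hmem : stretchIndex G ∈ {t | 1 ≤ t ∧ ∃ T, IsTreeSpanner G T t} := Nat.sInf_mem hne
    exact (h ▸ hmem).2
  · intro hT
    refine IsLeast.csInf_eq ⟨⟨one_le_two, hT⟩, ?_⟩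
    rintro t ⟨ht, T, hT⟩
    by_contra! hlt
    obtain rfl : t = 1 := by omega
    exact hG hT.isTree_of_one

lemma isTreeSpanner_starGraph {r : V} (hr : G.IsUniversal r) :
    IsTreeSpanner G (starGraph r) 2 := by
  refine ⟨fun u v huv => ?_, isTree_starGraph r, fun u v _ => dist_starGraph_le_two r u v⟩
  obtain ⟨hne, rfl | rfl⟩ := starGraph_adj.mp huv
  · exact hr hne
  · exact (hr hne.symm).symm

lemma IsTreeSpanner.exists_isUniversal {Q : Set V} (hT : IsTreeSpanner G T 2)
    (hclique : G.IsClique Q)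
    (hout : ∀ s ∉ Q, ∃ q₁ ∈ Q, ∃ q₂ ∈ Q, q₁ ≠ q₂ ∧ G.Adj s q₁ ∧ G.Adj s q₂) :
    ∃ c, G.IsUniversal c := by
  obtain ⟨hle, hT, hdist⟩ := hT
  have hQ : ∀ a ∈ Q, ∀ b ∈ Q, T.dist a b ≤ 2 := by
    intro a ha b hb
    rcases eq_or_ne a b with rfl | hab
    · simp
    · exact hdist a b (hclique ha hb hab)
  obtain ⟨c, hc⟩ := hT.exists_dist_le_one_of_dist_le_two hQ
  have adj_of_dist : ∀ {w}, T.dist c w ≤ 1 → c ≠ w → T.Adj c w :=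
    fun h hne => hT.connected.adj_of_dist_le_one h hne
  refine ⟨c, fun w hcw => ?_⟩
  by_cases hw : w ∈ Q
  · exact hle (adj_of_dist (hc w hw) hcw)
  obtain ⟨q₁, hq₁, q₂, hq₂, hne, hw₁, hw₂⟩ := hout w hw
  by_cases h₁ : c = q₁
  · exact h₁ ▸ hw₁.symm
  by_cases h₂ : c = q₂
  · exact h₂ ▸ hw₂.symm
  have hwc := hT.dist_le_one_of_dist_le_two hne (adj_of_dist (hc q₁ hq₁) h₁)
    (adj_of_dist (hc q₂ hq₂) h₂) (hdist w q₁ hw₁) (hdist w q₂ hw₂)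
  exact hle (adj_of_dist (dist_comm ▸ hwc) hcw)

end TreeSpanner

theorem stmt_7_general {V : Type*} [Fintype V] (G : SimpleGraph V) [DecidableRel G.Adj]
    (Q S : Set V)
    (hcover : Q ∪ S = Set.univ)
    (hclique : G.IsClique Q)
    (hindep : ∀ u ∈ S, ∀ v ∈ S, ¬ G.Adj u v)
    (hdeg : ∀ v ∈ S, 1 < G.degree v)
    (hnottree : ¬ G.IsTree) :
    stretchIndex G = 2 ↔ ∃ v : V, ∀ w : V, w ≠ v → G.Adj v w := by
  have mem_S : ∀ x ∉ Q, x ∈ S := fun x hx =>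
    (show x ∈ Q ∪ S from hcover ▸ Set.mem_univ x).resolve_left hx
  have hout : ∀ s ∉ Q, ∃ q₁ ∈ Q, ∃ q₂ ∈ Q, q₁ ≠ q₂ ∧ G.Adj s q₁ ∧ G.Adj s q₂ := by
    intro s hs
    have mem_Q : ∀ q, G.Adj s q → q ∈ Q := fun q hsq =>
      by_contra fun hq => hindep s (mem_S s hs) q (mem_S q hq) hsq
    obtain ⟨q₁, h₁, q₂, h₂, hne⟩ :=
      Finset.one_lt_card.mp (G.card_neighborFinset_eq_degree s ▸ hdeg s (mem_S s hs))
    rw [mem_neighborFinset] at h₁ h₂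
    exact ⟨q₁, mem_Q q₁ h₁, q₂, mem_Q q₂ h₂, hne, h₁, h₂⟩
  rw [stretchIndex_eq_two_iff hnottree]
  constructor
  · rintro ⟨T, hT⟩
    obtain ⟨v, hv⟩ := hT.exists_isUniversal hclique hout
    exact ⟨v, fun w hw => hv hw.symm⟩
  · rintro ⟨v, hv⟩
    exact ⟨_, isTreeSpanner_starGraph fun w hw => hv w hw.symm⟩

/-- For a connected split graph, not a tree, in which every vertex of the independent set
has degree greater than 1: `σ(G) = 2` iff `G` has a universal vertex. -/
theorem stmt_7 {V : Type*} [Fintype V] (G : SimpleGraph V) [DecidableRel G.Adj]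
    (hconn : G.Connected) (Q S : Set V)
    (hdisj : Disjoint Q S) (hcover : Q ∪ S = Set.univ)
    (hclique : G.IsClique Q)
    (hindep : ∀ u ∈ S, ∀ v ∈ S, ¬ G.Adj u v)
    (hdeg : ∀ v ∈ S, 1 < G.degree v)
    (hnottree : ¬ G.IsTree) :
    stretchIndex G = 2 ↔ ∃ v : V, ∀ w : V, w ≠ v → G.Adj v w :=
  stmt_7_general G Q S hcover hclique hindep hdeg hnottree
end

section
/- Every connected split graph is 3-admissible, i.e., admits a spanning tree in which any two vertices adjacent in G are at distance at most 3 in the tree. -/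
open SimpleGraph

namespace SimpleGraph

variable {V : Type*} {G T : SimpleGraph V}

lemma Connected.exists_isTree_le_forall_adj_of_adj (hG : G.Connected) (r : V) :
    ∃ T ≤ G, T.IsTree ∧ ∀ v, G.Adj r v → T.Adj r v := by
  obtain ⟨T, hstar, hTG, hT⟩ := hG.exists_isTree_le_of_le_of_isAcyclic
    (inf_le_left : G ⊓ starGraph r ≤ G) ((isAcyclic_starGraph r).anti inf_le_right)
  exact ⟨T, hTG, hT, fun v hv => hstar ⟨hv, starGraph_center_adj hv.ne⟩⟩

lemma dist_le_one_of_adj_or_eq {u v : V} (h : T.Adj u v ∨ u = v) : T.dist u v ≤ 1 := by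
  rcases h with h | rfl
  · exact (dist_eq_one_iff_adj.2 h).le
  · simp

section Split

variable {Q S : Set V}

lemma mem_or_mem_of_adj_of_union_eq_univ (hcover : Q ∪ S = Set.univ)
    (hindep : ∀ u ∈ S, ∀ v ∈ S, ¬ G.Adj u v) {u v : V} (huv : G.Adj u v) : u ∈ Q ∨ v ∈ Q := by
  have hmem : ∀ w, w ∈ Q ∨ w ∈ S := fun w => by simp [← Set.mem_union, hcover]
  by_contra! h
  exact hindep u ((hmem u).resolve_left h.1) v ((hmem v).resolve_left h.2) huv

lemma dist_le_three_of_adj_of_isClique (hcover : Q ∪ S = Set.univ) (hclique : G.IsClique Q)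
    (hindep : ∀ u ∈ S, ∀ v ∈ S, ¬ G.Adj u v) (hTG : T ≤ G) (hT : T.Connected) {r : V}
    (hr : r ∈ Q) (hstar : ∀ v, G.Adj r v → T.Adj r v) {u v : V} (huv : G.Adj u v) :
    T.dist u v ≤ 3 := by
  have : Nontrivial V := ⟨u, v, huv.ne⟩
  have hnear : ∀ {q}, q ∈ Q → T.dist r q ≤ 1 := fun {q} hq =>
    dist_le_one_of_adj_or_eq <| (eq_or_ne r q).symm.imp (fun h => hstar q (hclique hr hq h)) id
  have hfar : ∀ w, T.dist r w ≤ 2 := by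
    intro w
    obtain ⟨x, hwx⟩ := hT.preconnected.exists_adj_of_nontrivial w
    rcases mem_or_mem_of_adj_of_union_eq_univ hcover hindep (hTG hwx) with hw | hx
    · exact (hnear hw).trans (by norm_num)
    · calc T.dist r w ≤ T.dist r x + T.dist x w := hT.dist_triangle
        _ ≤ 1 + 1 := add_le_add (hnear hx) (dist_le_one_of_adj_or_eq (.inl hwx.symm))
  rcases mem_or_mem_of_adj_of_union_eq_univ hcover hindep huv with hu | hv
  · calc T.dist u v ≤ T.dist u r + T.dist r v := hT.dist_triangle
      _ ≤ 1 + 2 := add_le_add (dist_comm.trans_le (hnear hu)) (hfar v)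
  · calc T.dist u v ≤ T.dist u r + T.dist r v := hT.dist_triangle
      _ ≤ 2 + 1 := add_le_add (dist_comm.trans_le (hfar u)) (hnear hv)

end Split

end SimpleGraph

theorem stmt_8_general {V : Type*} (G : SimpleGraph V)
    (hconn : G.Connected) (Q S : Set V)
    (hcover : Q ∪ S = Set.univ)
    (hclique : G.IsClique Q)
    (hindep : ∀ u ∈ S, ∀ v ∈ S, ¬ G.Adj u v) :
    ∃ T : SimpleGraph V, IsTreeSpanner G T 3 := by
  rcases Q.eq_empty_or_nonempty with rfl | ⟨r, hr⟩
  · obtain ⟨T, hTG, hT⟩ := hconn.exists_isTree_le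
    refine ⟨T, hTG, hT, fun u v huv => ?_⟩
    simpa using mem_or_mem_of_adj_of_union_eq_univ hcover hindep huv
  · obtain ⟨T, hTG, hT, hstar⟩ := hconn.exists_isTree_le_forall_adj_of_adj r
    exact ⟨T, hTG, hT, fun u v =>
      dist_le_three_of_adj_of_isClique hcover hclique hindep hTG hT.connected hr hstar⟩

/-- Every connected split graph is 3-admissible. -/
theorem stmt_8 {V : Type*} [Fintype V] (G : SimpleGraph V)
    (hconn : G.Connected) (Q S : Set V)
    (hdisj : Disjoint Q S) (hcover : Q ∪ S = Set.univ)
    (hclique : G.IsClique Q)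
    (hindep : ∀ u ∈ S, ∀ v ∈ S, ¬ G.Adj u v) :
    ∃ T : SimpleGraph V, IsTreeSpanner G T 3 :=
  stmt_8_general G hconn Q S hcover hclique hindep
end

section
/- Let n be odd, and let H* be the graph on n vertices formed by a clique Q on n − 1 vertices together with a vertex s adjacent to exactly (n−1)/2 vertices of Q. Fix a proper edge coloring of H* with Δ = n − 1 colors. Then each vertex of Q not adjacent to s misses exactly one color, and these missing colors are mutually distinct; moreover, each color used on the (n−1)/2 edges incident to s is the missing color of exactly one vertex of Q not adjacent to s. -/
open Finset

namespace SimpleGraph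

variable {V α : Type*} {G : SimpleGraph V} {c : Sym2 V → α} {v : V} {k : α}

def MissesColor (G : SimpleGraph V) (c : Sym2 V → α) (v : V) (k : α) : Prop :=
  ∀ e ∈ G.edgeSet, v ∈ e → c e ≠ k

lemma missesColor_iff : G.MissesColor c v k ↔ ∀ w, G.Adj v w → c s(v, w) ≠ k := by
  refine ⟨fun h w hw => h _ hw (Sym2.mem_mk_left _ _), fun h e he hv => ?_⟩
  induction e with
  | _ a b =>
    rcases Sym2.mem_iff.mp hv with rfl | rfl
    · exact h b he
    · exact Sym2.eq_swap (a := a) ▸ h a (G.adj_symm he)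

def colorClass (G : SimpleGraph V) (c : Sym2 V → α) (k : α) : SimpleGraph V where
  Adj u w := G.Adj u w ∧ c s(u, w) = k
  symm := ⟨fun u _ h => ⟨h.1.symm, Sym2.eq_swap (a := u) ▸ h.2⟩⟩
  loopless := ⟨fun _ h => G.irrefl h.1⟩

@[simp]
lemma colorClass_adj {u w : V} : (G.colorClass c k).Adj u w ↔ G.Adj u w ∧ c s(u, w) = k :=
  Iff.rfl

end SimpleGraph

namespace IsProperEdgeColoring

open SimpleGraph

variable {V α : Type*} {G : SimpleGraph V} {c : Sym2 V → α}

lemma injOn_neighborSet (hc : IsProperEdgeColoring G c) (v : V) :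
    Set.InjOn (fun w => c s(v, w)) (G.neighborSet v) := by
  intro w hw w' hw' h
  by_contra hne
  exact hc _ hw _ hw' (fun h' => hne (Sym2.congr_right.mp h'))
    ⟨v, Sym2.mem_mk_left _ _, Sym2.mem_mk_left _ _⟩ h

lemma ncard_missesColor [Finite α] (hc : IsProperEdgeColoring G c) (v : V)
    [Fintype (G.neighborSet v)] :
    {k | G.MissesColor c v k}.ncard = Nat.card α - G.degree v := by
  have : {k | G.MissesColor c v k} = ((fun w => c s(v, w)) '' G.neighborSet v)ᶜ := by
    ext k
    simp [missesColor_iff]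
  rw [this, Set.ncard_compl, (hc.injOn_neighborSet v).ncard_image,
    Set.ncard_eq_toFinset_card', degree, neighborFinset]

lemma degree_colorClass_le_one (hc : IsProperEdgeColoring G c) (k : α) (v : V)
    [Fintype ((G.colorClass c k).neighborSet v)] : (G.colorClass c k).degree v ≤ 1 := by
  refine Finset.card_le_one.mpr fun w hw w' hw' => ?_
  rw [mem_neighborFinset] at hw hw'
  exact hc.injOn_neighborSet v hw.1 hw'.1 (hw.2.trans hw'.2.symm)

lemma missesColor_iff_degree_colorClass_eq_zero {k : α} {v : V}
    [Fintype ((G.colorClass c k).neighborSet v)] :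
    G.MissesColor c v k ↔ (G.colorClass c k).degree v = 0 := by
  rw [← card_neighborFinset_eq_degree, Finset.card_eq_zero, Finset.eq_empty_iff_forall_notMem]
  simp [missesColor_iff]

lemma exists_missesColor_of_odd_card [Fintype V] (hc : IsProperEdgeColoring G c)
    (hV : Odd (Fintype.card V)) (k : α) : ∃ v, G.MissesColor c v k := by
  classical
  by_contra! hcov
  have hdeg : ∀ v, (G.colorClass c k).degree v = 1 := fun v =>
    le_antisymm (hc.degree_colorClass_le_one k v)
      (Nat.one_le_iff_ne_zero.mpr (missesColor_iff_degree_colorClass_eq_zero.not.mp (hcov v)))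
  have := (G.colorClass c k).sum_degrees_eq_twice_card_edges
  simp only [hdeg, Finset.sum_const, Finset.card_univ, smul_eq_mul, mul_one] at this
  exact Nat.not_even_iff_odd.mpr hV ⟨_, this.trans (two_mul _)⟩

lemma existsUnique_missesColor [Fintype V] [DecidableRel G.Adj] [Fintype α]
    (hc : IsProperEdgeColoring G c) (hV : Odd (Fintype.card V))
    (hdeficit : ∑ v, (Fintype.card α - G.degree v) = Fintype.card α) (k : α) :
    ∃! v, G.MissesColor c v k := by
  classical
  have hcount : ∀ k, #{v | G.MissesColor c v k} = 1 := by
    have hpos : ∀ k ∈ univ, 1 ≤ #{v | G.MissesColor c v k} := fun k _ =>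
      Finset.card_pos.mpr <| (hc.exists_missesColor_of_odd_card hV k).imp fun v hv => by simpa
    refine fun k => ((Finset.sum_eq_sum_iff_of_le hpos).mp ?_ k (mem_univ k)).symm
    calc ∑ _ : α, 1 = ∑ v, (Fintype.card α - G.degree v) := by simp [hdeficit]
      _ = ∑ v, #{k | G.MissesColor c v k} := by
        refine Finset.sum_congr rfl fun v _ => ?_
        rw [← Nat.card_eq_fintype_card, ← hc.ncard_missesColor v, ← Set.ncard_coe_finset,
          Finset.coe_filter_univ]
      _ = ∑ k, #{v | G.MissesColor c v k} :=
        Finset.sum_card_bipartiteAbove_eq_sum_card_bipartiteBelow _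
  simpa using Finset.card_eq_one_iff_existsUnique.mp (hcount k)

lemma existsUnique_missesColor_of_degree_add_one [Fintype α] (hc : IsProperEdgeColoring G c)
    {v : V} [Fintype (G.neighborSet v)] (h : G.degree v + 1 = Fintype.card α) :
    ∃! k, G.MissesColor c v k := by
  have hcard : {k | G.MissesColor c v k}.ncard = 1 := by
    rw [hc.ncard_missesColor v, Nat.card_eq_fintype_card]
    omega
  obtain ⟨k, hk⟩ := Set.ncard_eq_one.mp hcard
  exact ⟨k, Set.eq_singleton_iff_unique_mem.mp hk⟩

lemma not_missesColor_of_degree_eq [Fintype α] (hc : IsProperEdgeColoring G c) {v : V}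
    [Fintype (G.neighborSet v)] (h : G.degree v = Fintype.card α) (k : α) :
    ¬ G.MissesColor c v k := by
  have hcard : {k | G.MissesColor c v k}.ncard = 0 := by
    rw [hc.ncard_missesColor v, Nat.card_eq_fintype_card, h, Nat.sub_self]
  exact Set.eq_empty_iff_forall_notMem.mp ((Set.ncard_eq_zero).mp hcard) k

end IsProperEdgeColoring

namespace SimpleGraph

variable {V : Type*} {H : SimpleGraph V} {s : V} {A : Set V}

/-- The graph `H*`: a clique on `V \ {s}`, with `s` adjacent exactly to the vertices of `A`. -/
def IsCliqueWithVertex (H : SimpleGraph V) (s : V) (A : Set V) : Prop :=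
  ∀ u v, H.Adj u v ↔
    (u ≠ v ∧ u ≠ s ∧ v ≠ s) ∨ (u = s ∧ v ∈ A) ∨ (v = s ∧ u ∈ A)

namespace IsCliqueWithVertex

lemma notMem (hH : H.IsCliqueWithVertex s A) : s ∉ A := fun hs =>
  H.irrefl ((hH s s).mpr (Or.inr (Or.inl ⟨rfl, hs⟩)))

variable [Fintype V] [DecidableRel H.Adj]

lemma degree_eq_ncard (hH : H.IsCliqueWithVertex s A) : H.degree s = A.ncard := by
  classical
  have : H.neighborFinset s = A.toFinset := by
    ext w
    have := hH.notMem
    simp only [mem_neighborFinset, hH s w, Set.mem_toFinset]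
    grind
  rw [← card_neighborFinset_eq_degree, this, Set.ncard_eq_toFinset_card']

lemma degree_add_one_of_mem (hH : H.IsCliqueWithVertex s A) {a : V} (ha : a ∈ A) :
    H.degree a + 1 = Fintype.card V := by
  classical
  have : H.neighborFinset a = univ.erase a := by
    ext w
    have := hH.notMem
    simp only [mem_neighborFinset, hH a w, mem_erase, mem_univ, and_true]
    grind
  rw [← card_neighborFinset_eq_degree, this, card_erase_add_one (mem_univ a), card_univ]

lemma degree_add_two_of_notMem (hH : H.IsCliqueWithVertex s A) {q : V} (hqs : q ≠ s)
    (hqA : q ∉ A) : H.degree q + 2 = Fintype.card V := by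
  classical
  have : H.neighborFinset q = (univ.erase s).erase q := by
    ext w
    simp only [mem_neighborFinset, hH q w, mem_erase, mem_univ, and_true]
    grind
  rw [← card_neighborFinset_eq_degree, this, ← card_univ, ← card_erase_add_one (mem_univ s),
    ← card_erase_add_one (mem_erase.mpr ⟨hqs, mem_univ q⟩)]

lemma sum_sub_degree (hH : H.IsCliqueWithVertex s A) (hV : Odd (Fintype.card V))
    (hA : A.ncard = (Fintype.card V - 1) / 2) :
    ∑ v, (Fintype.card V - 1 - H.degree v) = Fintype.card V - 1 := by
  classical
  have hdeficit : ∀ v ∈ univ.erase s,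
      Fintype.card V - 1 - H.degree v = if v ∈ A then 0 else 1 := by
    intro v hv
    split_ifs with hvA
    · have := hH.degree_add_one_of_mem hvA; omega
    · have := hH.degree_add_two_of_notMem (ne_of_mem_erase hv) hvA; omega
  have hfilter : (univ.erase s).filter (· ∈ A) = A.toFinset := by
    ext v
    have := hH.notMem
    simp only [mem_filter, mem_erase, mem_univ, Set.mem_toFinset]
    grind
  have hsplit := card_filter_add_card_filter_not (s := univ.erase s) (· ∈ A)
  rw [hfilter, ← Set.ncard_eq_toFinset_card', card_erase_of_mem (mem_univ s), card_univ] at hsplit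
  rw [← add_sum_erase _ _ (mem_univ s), sum_congr rfl hdeficit, sum_ite, sum_const_zero,
    sum_const, smul_eq_mul, mul_one, zero_add, hH.degree_eq_ncard]
  obtain ⟨m, hm⟩ := hV
  omega

end IsCliqueWithVertex

end SimpleGraph

theorem stmt_12_general {V : Type*} [Fintype V] (n : ℕ) (hodd : Odd n)
    (hcard : Fintype.card V = n) (s : V) (A : Set V)
    (hAcard : A.ncard = (n - 1) / 2) (H : SimpleGraph V)
    (hadj : ∀ u v : V, H.Adj u v ↔
      (u ≠ v ∧ u ≠ s ∧ v ≠ s) ∨ (u = s ∧ v ∈ A) ∨ (v = s ∧ u ∈ A))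
    (c : Sym2 V → Fin (n - 1)) (hc : IsProperEdgeColoring H c) :
    (∀ q : V, q ≠ s → q ∉ A →
      ∃! k : Fin (n - 1), ∀ e ∈ H.edgeSet, q ∈ e → c e ≠ k) ∧
    (∀ q q' : V, q ≠ s → q ∉ A → q' ≠ s → q' ∉ A → q ≠ q' →
      ∀ k : Fin (n - 1), (∀ e ∈ H.edgeSet, q ∈ e → c e ≠ k) →
        ¬ (∀ e ∈ H.edgeSet, q' ∈ e → c e ≠ k)) ∧
    (∀ e ∈ H.edgeSet, s ∈ e →
      ∃! q : V, q ≠ s ∧ q ∉ A ∧ ∀ e' ∈ H.edgeSet, q ∈ e' → c e' ≠ c e) := by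
  classical
  subst hcard
  have hH : H.IsCliqueWithVertex s A := hadj
  have hunique : ∀ k, ∃! v, H.MissesColor c v k :=
    hc.existsUnique_missesColor hodd (by simpa using hH.sum_sub_degree hodd hAcard)
  refine ⟨fun q hqs hqA => ?_, fun q q' _ _ _ _ hne k hq hq' => hne ((hunique k).unique hq hq'),
    fun e he hse => ?_⟩
  · have hdeg := hH.degree_add_two_of_notMem hqs hqA
    exact hc.existsUnique_missesColor_of_degree_add_one (by rw [Fintype.card_fin]; omega)
  · obtain ⟨v, hv, hv_unique⟩ := hunique (c e)
    have hvs : v ≠ s := by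
      rintro rfl
      exact hv e he hse rfl
    have hvA : v ∉ A := fun hvA => by
      have hdeg := hH.degree_add_one_of_mem hvA
      exact hc.not_missesColor_of_degree_eq (by rw [Fintype.card_fin]; omega) _ hv
    exact ⟨v, ⟨hvs, hvA, hv⟩, fun q hq => hv_unique q hq.2.2⟩

/-- In a proper `(n-1)`-edge-coloring of the saturated graph `H*` (clique on `n - 1`
vertices plus `s` joined to `(n-1)/2` clique vertices, `n` odd), each clique vertex not
adjacent to `s` misses exactly one color, these missing colors are mutually distinct, and
each color on an edge at `s` is the missing color of exactly one such vertex. -/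
theorem stmt_12 {V : Type*} [Fintype V] (n : ℕ) (hodd : Odd n) (hn : 3 ≤ n)
    (hcard : Fintype.card V = n) (s : V) (A : Set V) (hA : A ⊆ {s}ᶜ)
    (hAcard : A.ncard = (n - 1) / 2) (H : SimpleGraph V)
    (hadj : ∀ u v : V, H.Adj u v ↔
      (u ≠ v ∧ u ≠ s ∧ v ≠ s) ∨ (u = s ∧ v ∈ A) ∨ (v = s ∧ u ∈ A))
    (c : Sym2 V → Fin (n - 1)) (hc : IsProperEdgeColoring H c) :
    (∀ q : V, q ≠ s → q ∉ A →
      ∃! k : Fin (n - 1), ∀ e ∈ H.edgeSet, q ∈ e → c e ≠ k) ∧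
    (∀ q q' : V, q ≠ s → q ∉ A → q' ≠ s → q' ∉ A → q ≠ q' →
      ∀ k : Fin (n - 1), (∀ e ∈ H.edgeSet, q ∈ e → c e ≠ k) →
        ¬ (∀ e ∈ H.edgeSet, q' ∈ e → c e ≠ k)) ∧
    (∀ e ∈ H.edgeSet, s ∈ e →
      ∃! q : V, q ≠ s ∧ q ∉ A ∧ ∀ e' ∈ H.edgeSet, q ∈ e' → c e' ≠ c e) :=
  stmt_12_general n hodd hcard s A hAcard H hadj c hc
end

section
/- For odd n ≥ 3, the graph on n vertices formed by a clique on n − 1 vertices plus one vertex adjacent to exactly (n−1)/2 clique vertices is not overfull, and admits a proper edge coloring with n − 1 colors (is Class 1). -/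
/-!
Deleting `s` leaves a graph on `n - 1` vertices, so `H` has at most
`(n - 1).choose 2 + deg s = (n - 1).choose 2 + (n - 1) / 2 = (n - 1) * (n / 2)` edges.

For the colouring, label the vertices other than `s` bijectively by `Fin (n - 1)`, the
neighbours of `s` by `0, …, (n - 3) / 2`. Colour a clique edge `uv` by `u + v` and an edge `sa`
by `2a`: the colours `v + u` at a clique vertex `v` are distinct and miss `2v`, and doubling is
injective on labels below `(n - 1) / 2`.
-/

open Finset

section

variable {V : Type*}

theorem SimpleGraph.card_edgeFinset_le_choose_two_add_degree [Fintype V] [DecidableEq V]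
    (G : SimpleGraph V) [DecidableRel G.Adj] (x : V) :
    #G.edgeFinset ≤ (Fintype.card V - 1).choose 2 + G.degree x := by
  have hdel := G.card_edgeFinset_deleteIncidenceSet x
  have hind := (G.induce {x}ᶜ).card_edgeFinset_le_card_choose_two
  rw [card_edgeFinset_induce_compl_singleton, hdel, Fintype.card_compl_set,
    Set.card_singleton] at hind
  omega

theorem Nat.two_mul_choose_two_add_self (m : ℕ) : (2 * m).choose 2 + m = 2 * m * m := by
  rw [Nat.choose_two_right, Nat.mul_assoc, Nat.mul_div_cancel_left _ two_pos]
  rcases m with _ | m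
  · rfl
  · rw [show 2 * (m + 1) - 1 = 2 * m + 1 by omega]
    ring

theorem isProperEdgeColoring_sym2Lift {α : Type*} (G : SimpleGraph V)
    (c : {c : V → V → α // ∀ u v, c u v = c v u})
    (hc : ∀ v x y, G.Adj v x → G.Adj v y → x ≠ y → c.1 v x ≠ c.1 v y) :
    IsProperEdgeColoring G (Sym2.lift c) := by
  rintro e₁ he₁ e₂ he₂ hne ⟨v, hv₁, hv₂⟩
  obtain ⟨x, rfl⟩ := Sym2.mem_iff_exists.mp hv₁
  obtain ⟨y, rfl⟩ := Sym2.mem_iff_exists.mp hv₂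
  simpa using hc v x y he₁ he₂ (by rintro rfl; exact hne rfl)

def apexSum {α : Type*} [DecidableEq V] [Add α] (s : V) (f : V → α) (u v : V) : α :=
  if u = s then f v + f v else if v = s then f u + f u else f u + f v

theorem apexSum_comm {α : Type*} [DecidableEq V] [AddCommMagma α] (s : V) (f : V → α)
    (u v : V) : apexSum s f u v = apexSum s f v u := by
  unfold apexSum
  split_ifs <;> subst_vars <;> simp [add_comm]

theorem isProperEdgeColoring_apexSum {α : Type*} [DecidableEq V] [AddCancelCommMonoid α]
    {G : SimpleGraph V} {s : V} {f : V → α} (hf : Set.InjOn f {s}ᶜ)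
    (hs : Set.InjOn (fun a => f a + f a) (G.neighborSet s)) :
    IsProperEdgeColoring G (Sym2.lift ⟨apexSum s f, apexSum_comm s f⟩) := by
  refine isProperEdgeColoring_sym2Lift G _ fun v x y hx hy hxy h => ?_
  by_cases hv : v = s
  · subst hv
    simp only [apexSum, if_true] at h
    exact hxy (hs hx hy h)
  simp only [apexSum, if_neg hv] at h
  split_ifs at h with hxs hys hys
  · exact hxy (hxs.trans hys.symm)
  · exact hy.ne (hf hv hys (add_left_cancel h))
  · exact hx.ne (hf hv hxs (add_left_cancel h).symm)
  · exact hxy (hf hxs hys (add_left_cancel h))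

theorem Fin.injOn_add_self {k : ℕ} :
    Set.InjOn (fun x : Fin k => x + x) {x | 2 * (x : ℕ) < k} := by
  intro x hx y hy h
  have hval := congrArg Fin.val h
  simp only [Set.mem_ofPred_eq] at hx hy
  simp only [Fin.val_add, Nat.mod_eq_of_lt (by omega : (x : ℕ) + x < k),
    Nat.mod_eq_of_lt (by omega : (y : ℕ) + y < k)] at hval
  exact Fin.ext (by omega)

theorem Finite.exists_equiv_fin_lt_card_subtype {W : Type*} [Finite W] (p : W → Prop) {k : ℕ}
    (hk : Nat.card W = k) :
    ∃ e : W ≃ Fin k, ∀ w, p w → (e w : ℕ) < Nat.card {w // p w} := by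
  classical
  have hsum : Nat.card {w // p w} + Nat.card {w // ¬p w} = k := by
    rw [← Nat.card_sum, Nat.card_congr (Equiv.sumCompl p), hk]
  refine ⟨(Equiv.sumCompl p).symm.trans (((Finite.equivFin _).sumCongr (Finite.equivFin _)).trans
    (finSumFinEquiv.trans (finCongr hsum))), fun w hw => ?_⟩
  simp [Equiv.sumCompl_symm_apply_of_pos hw]

theorem Set.exists_injOn_fin_lt_ncard [Finite V] {A C : Set V} (hAC : A ⊆ C) {k : ℕ} [NeZero k]
    (hC : C.ncard = k) :
    ∃ f : V → Fin k, Set.InjOn f C ∧ ∀ a ∈ A, (f a : ℕ) < A.ncard := by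
  classical
  obtain ⟨e, he⟩ := Finite.exists_equiv_fin_lt_card_subtype (fun w : C => (w : V) ∈ A)
    (k := k) (by rw [Nat.card_coe_set_eq, hC])
  have hcardA : Nat.card {w : C // (w : V) ∈ A} = A.ncard :=
    (Nat.card_congr (Equiv.subtypeSubtypeEquivSubtype fun h => hAC h)).trans (Nat.card_coe_set_eq A)
  rw [hcardA] at he
  refine ⟨fun v => if h : v ∈ C then e ⟨v, h⟩ else 0, fun u hu v hv huv => ?_,
    fun a ha => ?_⟩
  · simp only [dif_pos hu, dif_pos hv] at huv
    simpa using e.injective huv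
  · simpa [dif_pos (hAC ha)] using he ⟨a, hAC ha⟩ ha

end

/-- For odd `n ≥ 3`, the saturated graph (a clique on `n - 1` vertices plus one vertex
joined to exactly `(n-1)/2` clique vertices) is not overfull and is Class 1, i.e. admits
a proper edge coloring with `n - 1` colors. -/
theorem stmt_17 {V : Type*} [Fintype V] (n : ℕ) (hodd : Odd n) (hn : 3 ≤ n)
    (hcard : Fintype.card V = n) (s : V) (A : Set V) (hA : A ⊆ {s}ᶜ)
    (hAcard : A.ncard = (n - 1) / 2) (H : SimpleGraph V)
    (hadj : ∀ u v : V, H.Adj u v ↔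
      (u ≠ v ∧ u ≠ s ∧ v ≠ s) ∨ (u = s ∧ v ∈ A) ∨ (v = s ∧ u ∈ A)) :
    ¬ (H.edgeSet.ncard > (n - 1) * (n / 2)) ∧
    ∃ c : Sym2 V → Fin (n - 1), IsProperEdgeColoring H c := by
  classical
  obtain ⟨m, rfl⟩ := hodd
  have hsA : s ∉ A := fun h => hA h rfl
  have hN : H.neighborSet s = A := by
    ext v
    simp [hadj, hsA]
  have hAm : A.ncard = m := by omega
  constructor
  · have hdeg : H.degree s = m := by
      rw [← SimpleGraph.card_neighborSet_eq_degree, ← Nat.card_eq_fintype_card, hN,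
        Nat.card_coe_set_eq, hAm]
    have hE := H.card_edgeFinset_le_choose_two_add_degree s
    rw [hcard, hdeg, Nat.add_sub_cancel, Nat.two_mul_choose_two_add_self] at hE
    rwa [not_lt, Set.ncard_eq_toFinset_card', Nat.add_sub_cancel,
      show (2 * m + 1) / 2 = m by omega]
  · have : NeZero (2 * m + 1 - 1) := ⟨by omega⟩
    obtain ⟨f, hf, hfA⟩ := Set.exists_injOn_fin_lt_ncard hA
      (by rw [Set.ncard_compl, Set.ncard_singleton, Nat.card_eq_fintype_card, hcard])
    have hdouble : Set.MapsTo f (H.neighborSet s) {x | 2 * (x : ℕ) < 2 * m + 1 - 1} := by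
      intro a ha
      have := hfA a (hN ▸ ha)
      simp only [Set.mem_ofPred_eq]
      omega
    exact ⟨_, isProperEdgeColoring_apexSum hf
      (Fin.injOn_add_self.comp (hf.mono (hN ▸ hA)) hdouble)⟩
end
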